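/- For ξ ∈ ℕ^n with all coordinates positive and p ≥ |ξ|_1, if j appears as a coordinate of some element of I⁺(n,p) then for any i with 1 ≤ i < j, the total count of occurrences satisfies Λ_{I⁺(n,p)}(j) ≤ Λ_{I⁺(n,p)}(i), i.e., smaller positive values occur at least as often as larger ones among coordinates of vectors in I⁺(n,p). -/

import Mathlib

/-- The set I⁺(n,p) of vectors in ℕ^n with strictly positive coordinates and
coordinate sum at most p. -/
def Iplus (n p : ℕ) : Finset (Fin n → ℕ) :=
  ((Finset.range (p + 1)).biUnion (fun m => Finset.Nat.antidiagonalTuple n m)).filter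
    (fun ξ => ∀ i, 1 ≤ ξ i)

/-- Λ_{I⁺(n,p)}(j): total number of occurrences of j among coordinates of
vectors in I⁺(n,p). -/
def Lam (n p j : ℕ) : ℕ :=
  ∑ ξ ∈ Iplus n p, (Finset.univ.filter (fun i => ξ i = j)).card

/-!
Count occurrences coordinate by coordinate. For a fixed coordinate `l`, replacing `ξ l = j`
by the smaller positive value `i` stays inside I⁺(n,p) and is injective (restore `j` at `l`),
so every coordinate carries at least as many occurrences of `i` as of `j`.
-/

open Finset

lemma mem_Iplus {n p : ℕ} {ξ : Fin n → ℕ} :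
    ξ ∈ Iplus n p ↔ ∑ l, ξ l ≤ p ∧ ∀ l, 1 ≤ ξ l := by
  simp only [Iplus, mem_filter, mem_biUnion, mem_range, Finset.Nat.mem_antidiagonalTuple,
    Nat.lt_succ_iff, exists_eq_right']

lemma update_mem_Iplus {n p a : ℕ} {ξ : Fin n → ℕ} {l : Fin n} (hξ : ξ ∈ Iplus n p)
    (ha : 1 ≤ a) (hal : a ≤ ξ l) : Function.update ξ l a ∈ Iplus n p := by
  rw [mem_Iplus] at hξ ⊢
  have hle : ∀ m, Function.update ξ l a m ≤ ξ m := by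
    intro m
    rcases eq_or_ne m l with rfl | hm
    · simpa using hal
    · simp [hm]
  refine ⟨(sum_le_sum fun m _ => hle m).trans hξ.1, fun m => ?_⟩
  rcases eq_or_ne m l with rfl | hm
  · simpa using ha
  · simpa [hm] using hξ.2 m

lemma Lam_eq_sum_card (n p j : ℕ) :
    Lam n p j = ∑ l, #{ξ ∈ Iplus n p | ξ l = j} := by
  simp only [Lam, card_filter]
  exact sum_comm

lemma Function.update_injOn_fiber {ι α : Type*} [DecidableEq ι] (l : ι) (a b : α) :
    Set.InjOn (Function.update · l a) {f : ι → α | f l = b} := by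
  intro f hf g hg h
  have restore : ∀ f : ι → α, f l = b → Function.update (Function.update f l a) l b = f :=
    fun f hf => by rw [Function.update_idem, ← hf, Function.update_eq_self]
  rw [← restore f hf, ← restore g hg]
  exact congrArg (Function.update · l b) h

theorem Lam_antitone_general (n p j : ℕ) :
    ∀ i : ℕ, 1 ≤ i → i < j → Lam n p j ≤ Lam n p i := by
  intro i hi hij
  rw [Lam_eq_sum_card, Lam_eq_sum_card]
  refine sum_le_sum fun l _ => card_le_card_of_injOn (Function.update · l i) ?_ ?_
  · intro ξ hξ
    simp only [coe_filter, Set.mem_ofPred_eq] at hξ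
    simp only [coe_filter, Set.mem_ofPred_eq, Function.update_self, and_true]
    exact update_mem_Iplus hξ.1 hi (hξ.2 ▸ hij.le)
  · exact (Function.update_injOn_fiber l i j).mono fun ξ hξ => (mem_filter.mp hξ).2

/-- Monotonicity of occurrence counts: if j occurs as a coordinate of some element of
I⁺(n,p), then for any 1 ≤ i < j we have Λ(j) ≤ Λ(i). -/
theorem Lam_antitone (n p j : ℕ)
    (hj : ∃ ξ ∈ Iplus n p, ∃ l : Fin n, ξ l = j) :
    ∀ i : ℕ, 1 ≤ i → i < j → Lam n p j ≤ Lam n p i :=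
  Lam_antitone_general n p j
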